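/- There exists a constant C > 0 such that for all ρ ∈ ℰ₊, denoting by (λ_p)_{p≥1} the nonincreasing sequence of nonzero eigenvalues of ρ counted with multiplicity, one has Σ_{p≥1} p² λ_p ≤ C (Tr ρ + Tr(√H ρ √H)). -/

import Mathlib

/- Common setting (De Nitti–Méhats–Pinaud style quantum entropy minimization on the torus).

We model `L²(0,1)` with periodic boundary conditions as `L²` of the circle `ℝ/ℤ` with its
normalized Haar (Lebesgue) measure.  The free Hamiltonian `H = -d²/dx²` (periodic b.c.) is
diagonal in the Fourier basis `e_j(x) = exp(2iπjx)` with eigenvalues `μ_j = (2πj)²`; all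
trace-type quantities are expressed spectrally through this basis:
* `Tr T = Σ_j ⟨e_j, T e_j⟩`,
* `Tr(√H T √H) = Σ_j μ_j ⟨e_j, T e_j⟩` (since each `e_j` is an eigenvector of `√H`),
* `‖T‖²_{𝒥₂} = Σ_j ‖T e_j‖²`, and `‖√H T‖²_{𝒥₂} = Σ_j μ_j ‖T e_j‖²` for self-adjoint `T`,
* membership in `H¹_per`, the pairing with `H⁻¹_per` etc. are expressed via Fourier
  coefficients (`‖u'‖² = Σ_j μ_j |û_j|²`). -/

open MeasureTheory Real Filter

set_option synthInstance.maxHeartbeats 1000000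
set_option maxHeartbeats 1000000

noncomputable section

namespace QSM

local instance factOnePos : Fact ((0:ℝ) < 1) := ⟨one_pos⟩

/-- The one-dimensional torus `ℝ/ℤ`, modelling `[0,1]` with periodic boundary conditions. -/
abbrev Torus : Type := AddCircle (1:ℝ)

/-- The normalized Haar (= Lebesgue) measure on the torus. -/
abbrev μT : Measure Torus := @AddCircle.haarAddCircle 1 factOnePos

/-- The Hilbert space `L²(0,1)` (with periodic identification). -/
abbrev L2 : Type := Lp ℂ 2 μT

local instance instNUCFCRealL2 :
    NonUnitalContinuousFunctionalCalculus ℝ (L2 →L[ℂ] L2) IsSelfAdjoint :=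
  IsSelfAdjoint.instNonUnitalContinuousFunctionalCalculus

local instance instCFCRealL2 : ContinuousFunctionalCalculus ℝ (L2 →L[ℂ] L2) IsSelfAdjoint :=
  IsSelfAdjoint.instContinuousFunctionalCalculus

/-- The `j`-th Fourier exponential `x ↦ exp(2iπjx)` as an element of `L²`; these form a
Hilbert basis of eigenvectors of `H = -d²/dx²` with periodic boundary conditions. -/
def fE (j : ℤ) : L2 := fourierBasis j

/-- The eigenvalue `(2πj)²` of `H = -d²/dx²` on the Fourier mode `fE j`. -/
def muH (j : ℤ) : ℝ := (2 * π * j) ^ 2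

/-- The absolute value `|T| = √(T⋆T)` of an operator. -/
def absOp (T : L2 →L[ℂ] L2) : L2 →L[ℂ] L2 := CFC.sqrt (star T * T)

/-- The square root `√ρ` of a nonnegative operator. -/
def sqrtOp (ρ : L2 →L[ℂ] L2) : L2 →L[ℂ] L2 := CFC.sqrt ρ

/-- Diagonal trace sum `Σ_j Re⟨e_j, T e_j⟩` (the trace of `T`, when `T` is trace class). -/
def trD (T : L2 →L[ℂ] L2) : ℝ := ∑' j : ℤ, (inner ℂ (fE j) (T (fE j)) : ℂ).re

/-- The trace norm `Tr|T| = ‖T‖_{𝒥₁}`. -/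
def trNorm (T : L2 →L[ℂ] L2) : ℝ := trD (absOp T)

/-- `T` is trace class (`T ∈ 𝒥₁`). -/
def MemJ1 (T : L2 →L[ℂ] L2) : Prop :=
  Summable fun j : ℤ => (inner ℂ (fE j) (absOp T (fE j)) : ℂ).re

/-- Hilbert–Schmidt norm squared `‖T‖²_{𝒥₂} = Σ_j ‖T e_j‖²`. -/
def hsNormSq (T : L2 →L[ℂ] L2) : ℝ := ∑' j : ℤ, ‖T (fE j)‖ ^ 2

/-- `Tr(√H |T| √H) = Σ_j μ_j ⟨e_j, |T| e_j⟩`. -/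
def kinAbs (T : L2 →L[ℂ] L2) : ℝ :=
  ∑' j : ℤ, muH j * (inner ℂ (fE j) (absOp T (fE j)) : ℂ).re

/-- The kinetic energy `Tr(√H ρ √H) = Σ_j μ_j ⟨e_j, ρ e_j⟩`. -/
def kinE (ρ : L2 →L[ℂ] L2) : ℝ := ∑' j : ℤ, muH j * (inner ℂ (fE j) (ρ (fE j)) : ℂ).re

/-- `‖√H T‖²_{𝒥₂} = Σ_j μ_j ‖T e_j‖²` (valid for self-adjoint `T`). -/
def kinHSNormSq (T : L2 →L[ℂ] L2) : ℝ := ∑' j : ℤ, muH j * ‖T (fE j)‖ ^ 2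

/-- The energy space `ℰ`: self-adjoint trace-class `ρ` with `√H|ρ|√H` trace class. -/
def MemE (ρ : L2 →L[ℂ] L2) : Prop :=
  IsSelfAdjoint ρ ∧ MemJ1 ρ ∧
    Summable fun j : ℤ => muH j * (inner ℂ (fE j) (absOp ρ (fE j)) : ℂ).re

/-- The cone `ℰ₊` of nonnegative elements of the energy space. -/
def MemEplus (ρ : L2 →L[ℂ] L2) : Prop := MemE ρ ∧ 0 ≤ ρ

/-- The regularised entropy function `β_η(s) = (s+η)log(s+η) − s − η log η`;
for `η = 0` this is `β(s) = s log s − s` (with the convention `0 log 0 = 0`). -/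
def betaEnt (η : ℝ) (s : ℝ) : ℝ := (s + η) * Real.log (s + η) - s - η * Real.log η

/-- The von Neumann entropy `Tr(ρ log ρ − ρ)` (via the functional calculus). -/
def entropy (ρ : L2 →L[ℂ] L2) : ℝ := trD (cfc (fun s : ℝ => s * Real.log s - s) ρ)

/-- The free energy `F(ρ) = Tr(ρ log ρ − ρ) + Tr(√H ρ √H)`. -/
def freeEnergy (ρ : L2 →L[ℂ] L2) : ℝ := entropy ρ + kinE ρ

/-- The trace `Tr(Φρ) = Σ_j ⟨e_j, Φ·(ρ e_j)⟩` of `ρ` against a multiplication operator `Φ`. -/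
def traceAgainst (ρ : L2 →L[ℂ] L2) (Φ : Torus → ℂ) : ℂ :=
  ∑' j : ℤ, ∫ x, (starRingEnd ℂ) ((fE j : Torus → ℂ) x) * Φ x * ((ρ (fE j) : Torus → ℂ) x) ∂μT

/-- `n` is the local density `n[ρ]` of `ρ`: it is integrable and `Tr(Φρ) = ∫ Φ n`
for every bounded measurable `Φ` (acting by multiplication). -/
def IsDensity (ρ : L2 →L[ℂ] L2) (n : Torus → ℝ) : Prop :=
  Integrable n μT ∧
    ∀ Φ : Torus → ℂ, Measurable Φ → (∃ C, ∀ x, ‖Φ x‖ ≤ C) →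
      traceAgainst ρ Φ = ∫ x, Φ x * (n x : ℂ) ∂μT

/-- `H¹_per`-membership of a function, via its Fourier coefficients. -/
def MemH1Fun (u : Torus → ℂ) : Prop :=
  Integrable u μT ∧ Summable fun j : ℤ => (1 + muH j) * ‖fourierCoeff u j‖ ^ 2

/-- `H¹_per`-membership of an `L²` element, via its Fourier coefficients. -/
def MemH1 (u : L2) : Prop :=
  Summable fun j : ℤ => (1 + muH j) * ‖fourierBasis.repr u j‖ ^ 2

/-- The Dirichlet (kinetic) sesquilinear form `(√H u, √H v) = (u', v')`. -/
def QH (u v : L2) : ℂ :=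
  ∑' j : ℤ, (muH j : ℂ) * (starRingEnd ℂ) (fourierBasis.repr u j) * fourierBasis.repr v j

/-- Membership in `H⁻¹_per = (H¹_per)'` of the distribution `A = Σ_j a_j e_j` given by its
Fourier coefficients `a`. -/
def MemHm1 (a : ℤ → ℂ) : Prop := Summable fun j : ℤ => ‖a j‖ ^ 2 / (1 + muH j)

/-- The duality pairing `⟨A, v⟩_{H⁻¹_per, H¹_per} = Σ_j a_j v̂_{-j}` ("`∫ A v`"). -/
def pairHm1 (a : ℤ → ℂ) (v : Torus → ℂ) : ℂ := ∑' j : ℤ, a j * fourierCoeff v (-j)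

/-- The sesquilinear form `Q_A(u,v) = (u',v') + ⟨A, ū v⟩` for `A ∈ H⁻¹_per` (Fourier data `a`);
its diagonal is `Q_A(φ,φ) = ‖φ'‖² + ⟨A, |φ|²⟩`. -/
def QA (a : ℤ → ℂ) (u v : L2) : ℂ :=
  QH u v + pairHm1 a fun x => (starRingEnd ℂ) ((u : Torus → ℂ) x) * ((v : Torus → ℂ) x)

/-- The sesquilinear form `Q_A(u,v) = (u',v') + ∫ A ū v` for a potential `A ∈ L^∞`. -/
def QAfun (A : Torus → ℝ) (u v : L2) : ℂ :=
  QH u v + ∫ x, (A x : ℂ) * (starRingEnd ℂ) ((u : Torus → ℂ) x) * ((v : Torus → ℂ) x) ∂μT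

/-- `ρ = exp(−(H+A))` where `A ∈ H⁻¹_per`, given by its Fourier coefficients `a`, and `H+A`
is the self-adjoint operator (with compact resolvent) associated with the form `Q_A`:
there is a complete orthonormal system `(φ_p) ⊂ H¹_per` and reals `(μ_p)` such that the `φ_p`
are exactly the form-eigenvectors of `Q_A` with eigenvalues `μ_p`, and `ρ φ_p = exp(−μ_p) φ_p`. -/
def IsExpNegHA (a : ℤ → ℂ) (ρ : L2 →L[ℂ] L2) : Prop :=
  ∃ (φ : ℕ → L2) (μ : ℕ → ℝ),
    Orthonormal ℂ φ ∧ (Submodule.span ℂ (Set.range φ)).topologicalClosure = ⊤ ∧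
    ∀ p, MemH1 (φ p) ∧ ρ (φ p) = (Real.exp (-μ p) : ℂ) • φ p ∧
      ∀ ψ : L2, MemH1 ψ → QA a (φ p) ψ = (μ p : ℂ) * (inner ℂ (φ p) ψ : ℂ)

/-- `ρ = exp(−(H+A))` for a (bounded) real potential `A`, in the quadratic-form sense. -/
def IsExpNegHAfun (A : Torus → ℝ) (ρ : L2 →L[ℂ] L2) : Prop :=
  ∃ (φ : ℕ → L2) (μ : ℕ → ℝ),
    Orthonormal ℂ φ ∧ (Submodule.span ℂ (Set.range φ)).topologicalClosure = ⊤ ∧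
    ∀ p, MemH1 (φ p) ∧ ρ (φ p) = (Real.exp (-μ p) : ℂ) • φ p ∧
      ∀ ψ : L2, MemH1 ψ → QAfun A (φ p) ψ = (μ p : ℂ) * (inner ℂ (φ p) ψ : ℂ)

/-- A complete orthonormal eigenbasis of `ρ` with nonincreasing nonnegative eigenvalues
(the nonzero eigenvalues in nonincreasing order, counted with multiplicity, padded by `0`s). -/
def IsEigenbasis (ρ : L2 →L[ℂ] L2) (φ : ℕ → L2) (lam : ℕ → ℝ) : Prop :=
  Orthonormal ℂ φ ∧ (Submodule.span ℂ (Set.range φ)).topologicalClosure = ⊤ ∧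
    Antitone lam ∧ (∀ p, 0 ≤ lam p) ∧ ∀ p, ρ (φ p) = (lam p : ℂ) • φ p

/-- The hypothesis «`n ∈ H¹_per` and `n > 0` on `[0,1]`», stated for the continuous
representative of `n`. -/
def GoodDensity (n : Torus → ℝ) : Prop :=
  Continuous n ∧ (∀ x, 0 < n x) ∧
    Summable fun j : ℤ => (1 + muH j) * ‖fourierCoeff (fun x => (n x : ℂ)) j‖ ^ 2

/-- The penalized free energy `F_ε(ρ) = F(ρ) + (1/(2ε)) ‖n[ρ] − n‖²_{L²}`,
where `nρ = n[ρ]` is the density of `ρ`. -/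
def Feps (ε : ℝ) (n : Torus → ℝ) (ρ : L2 →L[ℂ] L2) (nρ : Torus → ℝ) : ℝ :=
  freeEnergy ρ + (1 / (2 * ε)) * ∫ x, (nρ x - n x) ^ 2 ∂μT

end QSM

/-! Write `c p j = |⟨φ p, e j⟩|²` for the eigenbasis `φ` of `ρ` and the Fourier basis `e`.
By Parseval and Bessel, `Σ_j c p j = 1` and `Σ_p c p j ≤ 1`, while `Tr ρ = Σ_p λ_p` and
`Tr(√H ρ √H) = Σ_p λ_p ‖√H φ_p‖²`. For each `N` the weights `t j = Σ_{p<N} c p j` lie in `[0,1]`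
and have total mass `N`, so (bathtub principle) a mass of order `N` sits at frequencies
`|j| ≳ N`, where `μ_j ≳ N²`; hence `Σ_{p<N} (p+1)² ≤ N³ ≤ 64 Σ_{p<N} (1 + ‖√H φ_p‖²)`.
As `λ` is nonincreasing, Abel summation turns these partial-sum bounds into
`Σ_p (p+1)² λ_p ≤ 64 Σ_p (1 + ‖√H φ_p‖²) λ_p = 64 (Tr ρ + Tr(√H ρ √H))`. -/

open Topology Finset
open scoped ENNReal InnerProductSpace

theorem Antitone.hasSum_sub_succ {f : ℕ → ℝ} (hf : Antitone f) (hf0 : Tendsto f atTop (𝓝 0)) :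
    HasSum (fun n => f n - f (n + 1)) (f 0) := by
  refine (hasSum_iff_tendsto_nat_of_nonneg (fun n => sub_nonneg.2 (hf n.le_succ)) _).2 ?_
  simp_rw [sum_range_sub']
  simpa using (tendsto_const_nhds (x := f 0)).sub hf0

theorem Antitone.ofReal_eq_tsum_ite_sub_succ {f : ℕ → ℝ} (hf : Antitone f)
    (hf0 : Tendsto f atTop (𝓝 0)) (p : ℕ) :
    ENNReal.ofReal (f p) = ∑' q, if p ≤ q then ENNReal.ofReal (f q - f (q + 1)) else 0 := by
  have hshift : HasSum (fun n => f (n + p) - f (n + p + 1)) (f p) := by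
    simpa [add_right_comm] using
      (hf.comp_monotone (add_left_mono (a := p))).hasSum_sub_succ
        (hf0.comp (tendsto_add_atTop_nat p))
  have htail : HasSum (fun q => if p ≤ q then f q - f (q + 1) else 0) (f p) := by
    refine (hasSum_nat_add_iff' p).1 ?_
    rw [sum_eq_zero fun i hi => if_neg (by simpa using hi), sub_zero]
    simpa using hshift
  rw [← htail.tsum_eq, ENNReal.ofReal_tsum_of_nonneg _ htail.summable]
  · exact tsum_congr fun q => by split_ifs <;> simp
  · intro q
    split_ifs <;> simp [hf q.le_succ]

theorem ENNReal.tsum_mul_tsum_ite_le_eq_tsum_sum_range_mul (x d : ℕ → ℝ≥0∞) :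
    ∑' p, x p * ∑' q, (if p ≤ q then d q else 0)
      = ∑' q, (∑ p ∈ range (q + 1), x p) * d q := by
  simp_rw [← ENNReal.tsum_mul_left, mul_ite, mul_zero]
  rw [ENNReal.tsum_comm]
  refine tsum_congr fun q => ?_
  rw [tsum_eq_sum (s := range (q + 1)) fun p hp => if_neg (by simpa [Nat.lt_succ_iff] using hp),
    sum_mul]
  exact sum_congr rfl fun p hp => if_pos (Nat.lt_succ_iff.1 (mem_range.1 hp))

/-- Abel summation, via `f p = Σ_{q ≥ p} (f q - f (q + 1))` with nonnegative increments. -/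
theorem ENNReal.tsum_mul_ofReal_le_of_sum_range_le {a b : ℕ → ℝ≥0∞} {f : ℕ → ℝ}
    (hf : Antitone f) (hf0 : Tendsto f atTop (𝓝 0))
    (hab : ∀ n, ∑ p ∈ range n, b p ≤ ∑ p ∈ range n, a p) :
    ∑' p, b p * ENNReal.ofReal (f p) ≤ ∑' p, a p * ENNReal.ofReal (f p) := by
  simp_rw [hf.ofReal_eq_tsum_ite_sub_succ hf0, ENNReal.tsum_mul_tsum_ite_le_eq_tsum_sum_range_mul]
  exact ENNReal.tsum_le_tsum fun q => mul_le_mul_left (hab (q + 1)) _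

theorem ENNReal.sq_mul_tsum_le_tsum_natAbs_sq_mul_add (t : ℤ → ℝ≥0∞) (ht : ∀ j, t j ≤ 1)
    (K : ℕ) :
    ((K : ℝ≥0∞) + 1) ^ 2 * ∑' j, t j
      ≤ ∑' j, (j.natAbs : ℝ≥0∞) ^ 2 * t j + ((K : ℝ≥0∞) + 1) ^ 2 * (2 * K + 1) := by
  set S := Icc (-(K : ℤ)) K
  have hpoint : ∀ j, ((K : ℝ≥0∞) + 1) ^ 2 * t j
      ≤ (j.natAbs : ℝ≥0∞) ^ 2 * t j + if j ∈ S then ((K : ℝ≥0∞) + 1) ^ 2 else 0 := by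
    intro j
    split_ifs with hj
    · exact le_add_left (mul_le_of_le_one_right' (ht j))
    · have hK : K + 1 ≤ j.natAbs := by
        simp only [S, mem_Icc, not_and_or, not_le] at hj
        omega
      rw [add_zero]
      gcongr
      exact_mod_cast hK
  have hS : ∑' j, (if j ∈ S then ((K : ℝ≥0∞) + 1) ^ 2 else 0)
      = ((K : ℝ≥0∞) + 1) ^ 2 * (2 * K + 1) := by
    rw [tsum_eq_sum (s := S) fun j hj => if_neg hj, sum_ite_mem, inter_self, sum_const,
      Int.card_Icc, nsmul_eq_mul, mul_comm]
    congr 1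
    rw [show (K : ℤ) + 1 - -K = ((2 * K + 1 : ℕ) : ℤ) by push_cast; ring, Int.toNat_natCast]
    push_cast
    ring
  calc ((K : ℝ≥0∞) + 1) ^ 2 * ∑' j, t j = ∑' j, ((K : ℝ≥0∞) + 1) ^ 2 * t j :=
        ENNReal.tsum_mul_left.symm
    _ ≤ ∑' j, ((j.natAbs : ℝ≥0∞) ^ 2 * t j + if j ∈ S then ((K : ℝ≥0∞) + 1) ^ 2 else 0) :=
        ENNReal.tsum_le_tsum hpoint
    _ = _ := by rw [ENNReal.tsum_add, hS]

theorem ENNReal.natCast_cube_le_of_tsum_eq (t : ℤ → ℝ≥0∞) (ht : ∀ j, t j ≤ 1) (N : ℕ)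
    (hN : ∑' j, t j = N) :
    (N : ℝ≥0∞) ^ 3 ≤ 64 * N + 64 * ∑' j, (j.natAbs : ℝ≥0∞) ^ 2 * t j := by
  rcases lt_or_ge N 8 with hN8 | hN8
  · refine le_add_right ?_
    have : N ^ 3 ≤ 64 * N := by interval_cases N <;> norm_num
    exact_mod_cast this
  set K := N / 4
  set X := ∑' j, (j.natAbs : ℝ≥0∞) ^ 2 * t j
  have hbath := ENNReal.sq_mul_tsum_le_tsum_natAbs_sq_mul_add t ht K
  rw [hN] at hbath
  have hcube : ((K : ℝ≥0∞) + 1) ^ 3 ≤ X := by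
    refine ENNReal.le_of_add_le_add_right (a := ((K : ℝ≥0∞) + 1) ^ 2 * (2 * K + 1))
      (by finiteness) (le_trans ?_ hbath)
    have : (K + 1) ^ 3 + (K + 1) ^ 2 * (2 * K + 1) ≤ (K + 1) ^ 2 * N := by
      rw [pow_succ, ← mul_add]
      gcongr
      omega
    exact_mod_cast this
  calc (N : ℝ≥0∞) ^ 3 ≤ 64 * ((K : ℝ≥0∞) + 1) ^ 3 := by
        have : N ^ 3 ≤ 64 * (K + 1) ^ 3 := by
          rw [show 64 * (K + 1) ^ 3 = (4 * (K + 1)) ^ 3 by ring]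
          gcongr
          omega
        exact_mod_cast this
    _ ≤ 64 * X := by gcongr
    _ ≤ 64 * N + 64 * X := le_add_self

theorem summable_and_tsum_le_of_tsum_ofReal_le {ι : Type*} {f : ι → ℝ} (hf : ∀ i, 0 ≤ f i)
    {c : ℝ} (hc : 0 ≤ c) (h : ∑' i, ENNReal.ofReal (f i) ≤ ENNReal.ofReal c) :
    Summable f ∧ ∑' i, f i ≤ c := by
  have hsum : Summable f := by
    simpa [ENNReal.toReal_ofReal (hf _)] using
      ENNReal.summable_toReal (ne_top_of_le_ne_top ENNReal.ofReal_ne_top h)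
  refine ⟨hsum, ?_⟩
  rwa [← ENNReal.ofReal_tsum_of_nonneg hf hsum, ENNReal.ofReal_le_ofReal_iff hc] at h

section HilbertBasis

variable {ι 𝕜 E : Type*} [RCLike 𝕜] [NormedAddCommGroup E] [InnerProductSpace 𝕜 E]

theorem HilbertBasis.hasSum_mul_norm_inner_sq_of_apply_eq_smul (b : HilbertBasis ι 𝕜 E)
    {T : E →L[𝕜] E} {lam : ι → ℝ} (hT : ∀ i, T (b i) = (lam i : 𝕜) • b i) (x : E) :
    HasSum (fun i => lam i * ‖⟪b i, x⟫_𝕜‖ ^ 2) (RCLike.re ⟪x, T x⟫_𝕜) := by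
  have h := ((b.hasSum_repr x).mapL ((innerSL 𝕜 x).comp T)).mapL RCLike.reCLM
  refine h.congr_fun fun i => ?_
  simp only [ContinuousLinearMap.comp_apply, map_smul, hT, innerSL_apply_apply,
    RCLike.reCLM_apply, b.repr_apply_apply, ← inner_conj_symm x (b i), smul_eq_mul]
  rw [mul_left_comm, RCLike.mul_conj]
  norm_cast

theorem HilbertBasis.hasSum_norm_inner_sq (b : HilbertBasis ι 𝕜 E) (x : E) :
    HasSum (fun i => ‖⟪b i, x⟫_𝕜‖ ^ 2) (‖x‖ ^ 2) := by
  simpa [inner_self_eq_norm_sq] using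
    b.hasSum_mul_norm_inner_sq_of_apply_eq_smul (T := 1) (lam := 1) (by simp) x


theorem HilbertBasis.ofReal_tsum_mul_re_inner_eq (b : HilbertBasis ι 𝕜 E) {T : E →L[𝕜] E}
    {lam : ι → ℝ} (hlam : ∀ i, 0 ≤ lam i) (hT : ∀ i, T (b i) = (lam i : 𝕜) • b i)
    {κ : Type*} (e : κ → E) {w : κ → ℝ} (hw : ∀ j, 0 ≤ w j)
    (hsum : Summable fun j => w j * RCLike.re ⟪e j, T (e j)⟫_𝕜) :
    ENNReal.ofReal (∑' j, w j * RCLike.re ⟪e j, T (e j)⟫_𝕜)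
      = ∑' i, ENNReal.ofReal (lam i) * ∑' j, ENNReal.ofReal (w j * ‖⟪e j, b i⟫_𝕜‖ ^ 2) := by
  have hdiag := fun j => b.hasSum_mul_norm_inner_sq_of_apply_eq_smul hT (e j)
  have hterm (j : κ) (i : ι) : 0 ≤ lam i * ‖⟪b i, e j⟫_𝕜‖ ^ 2 :=
    mul_nonneg (hlam i) (sq_nonneg _)
  rw [ENNReal.ofReal_tsum_of_nonneg (fun j => mul_nonneg (hw j) ((hdiag j).nonneg (hterm j)))
    hsum]
  calc ∑' j, ENNReal.ofReal (w j * RCLike.re ⟪e j, T (e j)⟫_𝕜)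
      = ∑' j, ∑' i, ENNReal.ofReal (lam i) * ENNReal.ofReal (w j * ‖⟪e j, b i⟫_𝕜‖ ^ 2) := by
        refine tsum_congr fun j => ?_
        rw [← (hdiag j).tsum_eq, ← tsum_mul_left, ENNReal.ofReal_tsum_of_nonneg
          (fun i => mul_nonneg (hw j) (hterm j i)) ((hdiag j).summable.mul_left _)]
        refine tsum_congr fun i => ?_
        rw [← ENNReal.ofReal_mul (hlam i), norm_inner_symm]
        ring_nf
    _ = _ := by
        rw [ENNReal.tsum_comm]
        simp_rw [ENNReal.tsum_mul_left]

end HilbertBasis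

namespace QSM

/-- `‖√H u‖²`, valued in `ℝ≥0∞` since an eigenvector of `ρ` for the eigenvalue `0` need not
lie in `H¹_per`. -/
def kineticEnergy (u : L2) : ℝ≥0∞ := ∑' j, ENNReal.ofReal (muH j * ‖⟪fE j, u⟫_ℂ‖ ^ 2)

theorem muH_nonneg (j : ℤ) : 0 ≤ muH j := sq_nonneg _

theorem natAbs_sq_le_muH (j : ℤ) : (j.natAbs : ℝ≥0∞) ^ 2 ≤ ENNReal.ofReal (muH j) := by
  rw [← ENNReal.ofReal_natCast, ← ENNReal.ofReal_pow (Nat.cast_nonneg _)]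
  refine ENNReal.ofReal_le_ofReal ?_
  rw [Nat.cast_natAbs, Int.cast_abs, sq_abs, muH, mul_pow]
  have : (1 : ℝ) ≤ (2 * π) ^ 2 := one_le_pow₀ (by linarith [pi_gt_three])
  nlinarith [sq_nonneg (j : ℝ)]

theorem tsum_ofReal_norm_inner_fE_sq (u : L2) :
    ∑' j, ENNReal.ofReal (‖⟪fE j, u⟫_ℂ‖ ^ 2) = ENNReal.ofReal (‖u‖ ^ 2) := by
  have h := fourierBasis.hasSum_norm_inner_sq u
  rw [← h.tsum_eq, ENNReal.ofReal_tsum_of_nonneg (fun j => sq_nonneg _) h.summable]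
  rfl

theorem sum_range_succ_sq_le_kineticEnergy {φ : ℕ → L2} (hφ : Orthonormal ℂ φ) (N : ℕ) :
    ∑ p ∈ range N, ((p : ℝ≥0∞) + 1) ^ 2
      ≤ ∑ p ∈ range N, 64 * (1 + kineticEnergy (φ p)) := by
  set t : ℤ → ℝ≥0∞ := fun j => ∑ p ∈ range N, ENNReal.ofReal (‖⟪fE j, φ p⟫_ℂ‖ ^ 2)
  have ht1 (j : ℤ) : t j ≤ 1 := by
    have hbessel := hφ.sum_inner_products_le (s := range N) (fE j)
    rw [show ‖fE j‖ = 1 from fourierBasis.orthonormal.1 j, one_pow] at hbessel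
    simp_rw [t, norm_inner_symm (fE j)]
    rw [← ENNReal.ofReal_sum_of_nonneg fun p _ => sq_nonneg _, ← ENNReal.ofReal_one]
    exact ENNReal.ofReal_le_ofReal hbessel
  have htN : ∑' j, t j = N := by
    calc ∑' j, t j = ∑ p ∈ range N, ∑' j, ENNReal.ofReal (‖⟪fE j, φ p⟫_ℂ‖ ^ 2) :=
          Summable.tsum_finsetSum fun p _ => ENNReal.summable
      _ = N := by
          simp only [tsum_ofReal_norm_inner_fE_sq, hφ.1, one_pow, ENNReal.ofReal_one,
            sum_const, card_range, nsmul_eq_mul, mul_one]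
  have hkin : ∑' j, (j.natAbs : ℝ≥0∞) ^ 2 * t j
      ≤ ∑ p ∈ range N, kineticEnergy (φ p) := by
    calc ∑' j, (j.natAbs : ℝ≥0∞) ^ 2 * t j
        ≤ ∑' j, ∑ p ∈ range N, ENNReal.ofReal (muH j * ‖⟪fE j, φ p⟫_ℂ‖ ^ 2) := by
          refine ENNReal.tsum_le_tsum fun j => ?_
          simp_rw [t, mul_sum, ENNReal.ofReal_mul (muH_nonneg j)]
          gcongr
          exact natAbs_sq_le_muH j
      _ = _ := Summable.tsum_finsetSum fun p _ => ENNReal.summable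
  calc ∑ p ∈ range N, ((p : ℝ≥0∞) + 1) ^ 2 ≤ (N : ℝ≥0∞) ^ 3 := by
        have : ∑ p ∈ range N, (p + 1) ^ 2 ≤ N ^ 3 := by
          calc ∑ p ∈ range N, (p + 1) ^ 2 ≤ ∑ p ∈ range N, N ^ 2 :=
                sum_le_sum fun p hp => by gcongr; exact mem_range.1 hp
            _ = N ^ 3 := by simp [pow_succ']
        exact_mod_cast this
    _ ≤ 64 * N + 64 * ∑' j, (j.natAbs : ℝ≥0∞) ^ 2 * t j :=
        ENNReal.natCast_cube_le_of_tsum_eq t ht1 N htN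
    _ ≤ 64 * N + 64 * ∑ p ∈ range N, kineticEnergy (φ p) := by gcongr
    _ = ∑ p ∈ range N, 64 * (1 + kineticEnergy (φ p)) := by
        rw [← mul_sum, sum_add_distrib, mul_add]
        simp


-- `absOp` is elaborated with this instance, which is declared only locally above.
local instance : ContinuousFunctionalCalculus ℝ (L2 →L[ℂ] L2) IsSelfAdjoint :=
  IsSelfAdjoint.instContinuousFunctionalCalculus

theorem absOp_of_nonneg {ρ : L2 →L[ℂ] L2} (hρ : 0 ≤ ρ) : absOp ρ = ρ := by
  rw [absOp, (IsSelfAdjoint.of_nonneg hρ).star_eq]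
  exact CFC.sqrt_mul_self ρ hρ

theorem re_inner_fE_apply_nonneg {ρ : L2 →L[ℂ] L2} (hρ : 0 ≤ ρ) (j : ℤ) :
    0 ≤ (inner ℂ (fE j) (ρ (fE j))).re :=
  ((ContinuousLinearMap.nonneg_iff_isPositive ρ).1 hρ).re_inner_nonneg_right (fE j)

theorem trD_nonneg {ρ : L2 →L[ℂ] L2} (hρ : 0 ≤ ρ) : 0 ≤ trD ρ :=
  tsum_nonneg (re_inner_fE_apply_nonneg hρ)

theorem kinE_nonneg {ρ : L2 →L[ℂ] L2} (hρ : 0 ≤ ρ) : 0 ≤ kinE ρ :=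
  tsum_nonneg fun j => mul_nonneg (muH_nonneg j) (re_inner_fE_apply_nonneg hρ j)

section Eigenbasis

variable {ρ : L2 →L[ℂ] L2} {b : HilbertBasis ℕ ℂ L2} {lam : ℕ → ℝ}

theorem ofReal_trD_eq_tsum (hlam : ∀ p, 0 ≤ lam p) (hb : ∀ p, ρ (b p) = (lam p : ℂ) • b p)
    (hsum : Summable fun j => (inner ℂ (fE j) (ρ (fE j))).re) :
    ENNReal.ofReal (trD ρ) = ∑' p, ENNReal.ofReal (lam p) := by
  simpa only [trD, RCLike.re_to_complex, Pi.one_apply, one_mul, tsum_ofReal_norm_inner_fE_sq,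
    b.orthonormal.1, one_pow, ENNReal.ofReal_one, mul_one] using
    b.ofReal_tsum_mul_re_inner_eq hlam hb fE (w := 1) (fun _ => zero_le_one) (by simpa using hsum)

theorem ofReal_kinE_eq_tsum (hlam : ∀ p, 0 ≤ lam p) (hb : ∀ p, ρ (b p) = (lam p : ℂ) • b p)
    (hsum : Summable fun j => muH j * (inner ℂ (fE j) (ρ (fE j))).re) :
    ENNReal.ofReal (kinE ρ) = ∑' p, ENNReal.ofReal (lam p) * kineticEnergy (b p) := by
  simpa only [kinE, kineticEnergy, RCLike.re_to_complex] using
    b.ofReal_tsum_mul_re_inner_eq hlam hb fE muH_nonneg (by simpa using hsum)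

end Eigenbasis

/-- There is `C > 0` such that for every `ρ ∈ ℰ₊` with nonincreasing
eigenvalues `(λ_p)` (counted with multiplicity, padded by zeros), one has
`Σ_p p² λ_p ≤ C (Tr ρ + Tr(√H ρ √H))` (indices shifted: `lam 0` is the first eigenvalue). -/
theorem weighted_eigenvalue_sum_bound :
    ∃ C : ℝ, 0 < C ∧ ∀ (ρ : L2 →L[ℂ] L2) (φ : ℕ → L2) (lam : ℕ → ℝ),
      MemEplus ρ → IsEigenbasis ρ φ lam →
      Summable (fun p : ℕ => ((p : ℝ) + 1) ^ 2 * lam p) ∧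
        ∑' p : ℕ, ((p : ℝ) + 1) ^ 2 * lam p ≤ C * (trD ρ + kinE ρ) := by
  refine ⟨64, by norm_num, ?_⟩
  rintro ρ φ lam ⟨⟨-, htr, hkin⟩, hρ⟩ ⟨hON, hdense, hanti, hlam, heig⟩
  rw [MemJ1, absOp_of_nonneg hρ] at htr
  rw [absOp_of_nonneg hρ] at hkin
  set b := HilbertBasis.mk hON hdense.ge
  have hρb : ∀ p, ρ (b p) = (lam p : ℂ) • b p := HilbertBasis.coe_mk hON hdense.ge ▸ heig
  have hTr := ofReal_trD_eq_tsum hlam hρb htr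
  have hKin := ofReal_kinE_eq_tsum hlam hρb hkin
  have hlam0 : Tendsto lam atTop (𝓝 0) :=
    (summable_and_tsum_le_of_tsum_ofReal_le hlam (trD_nonneg hρ) hTr.ge).1.tendsto_atTop_zero
  refine summable_and_tsum_le_of_tsum_ofReal_le (fun p => mul_nonneg (by positivity) (hlam p))
    (mul_nonneg (by norm_num) (add_nonneg (trD_nonneg hρ) (kinE_nonneg hρ))) ?_
  calc ∑' p : ℕ, ENNReal.ofReal (((p : ℝ) + 1) ^ 2 * lam p)
      = ∑' p : ℕ, ((p : ℝ≥0∞) + 1) ^ 2 * ENNReal.ofReal (lam p) := by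
        refine tsum_congr fun p => ?_
        rw [ENNReal.ofReal_mul (by positivity)]
        norm_cast
    _ ≤ ∑' p, 64 * (1 + kineticEnergy (b p)) * ENNReal.ofReal (lam p) :=
        ENNReal.tsum_mul_ofReal_le_of_sum_range_le hanti hlam0
          (sum_range_succ_sq_le_kineticEnergy b.orthonormal)
    _ = ENNReal.ofReal (64 * (trD ρ + kinE ρ)) := by
        rw [ENNReal.ofReal_mul (by norm_num), ENNReal.ofReal_add (trD_nonneg hρ) (kinE_nonneg hρ),
          hTr, hKin, ← ENNReal.tsum_add, ← ENNReal.tsum_mul_left]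
        refine tsum_congr fun p => ?_
        norm_num
        ring

end QSM
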